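/- arXiv:2012.06327 — 4 statements merged into one kernel-verified Lean document; each statement's English description precedes it below -/
import Mathlib

section
/- Let H be a k-colored r-graph on v vertices (k ≥ r ≥ 2) and suppose that π_n(H) → π as n → ∞. Then for every a > 0 there exist b > 0 and n_0 such that every k-colored r-graph G on n > n_0 vertices with h_n(G) > π + a contains at least b·C(n, v) distinct v-element subsets S of V(G) such that the sub-graph of G induced on S contains a copy of H (i.e., at least b·C(n,v) copies of H). -/
open Finset Filter

structure ColGraph (k r n : ℕ) where
  E : Fin k → Finset (Finset (Fin n))
  card_mem : ∀ i : Fin k, ∀ e ∈ E i, e.card = r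

namespace ColGraph

def IsSubgraph {k r m n : ℕ} (H : ColGraph k r m) (G : ColGraph k r n) : Prop :=
  ∃ f : Fin m → Fin n, Function.Injective f ∧
    ∀ i : Fin k, ∀ e ∈ H.E i, e.image f ∈ G.E i

noncomputable def density {k r n : ℕ} (G : ColGraph k r n) : ℝ :=
  (∑ i : Fin k, ((G.E i).card : ℝ)) / (n.choose r : ℝ)

noncomputable def turanDensityN {k r m : ℕ} (H : ColGraph k r m) (n : ℕ) : ℝ :=
  sSup {x : ℝ | ∃ G : ColGraph k r n, ¬ H.IsSubgraph G ∧ G.density = x}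

def IsHom {k r m p : ℕ} (G : ColGraph k r m) (H : ColGraph k r p) (f : Fin m → Fin p) : Prop :=
  ∀ i : Fin k, ∀ e ∈ G.E i, Set.InjOn f ↑e ∧ e.image f ∈ H.E i

def Colorable {k r m p : ℕ} (G : ColGraph k r m) (H : ColGraph k r p) : Prop :=
  ∃ f : Fin m → Fin p, G.IsHom H f

def blowUp {k r m : ℕ} (H : ColGraph k r m) (s : ℕ) : ColGraph k r (m * s) where
  E i := Finset.univ.filter (fun e : Finset (Fin (m * s)) =>
    e.card = r ∧ e.image (fun x => (finProdFinEquiv.symm x).1) ∈ H.E i)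
  card_mem i e he := (Finset.mem_filter.mp he).2.1

end ColGraph

noncomputable def famTuranDensityN {k r : ℕ} {ι : Type*} {v : ι → ℕ}
    (Hs : ∀ i, ColGraph k r (v i)) (n : ℕ) : ℝ :=
  sSup {x : ℝ | ∃ G : ColGraph k r n, (∀ i, ¬ (Hs i).IsSubgraph G) ∧ G.density = x}

def prodGraph {m p : ℕ} (G₁ : ColGraph 2 2 m) (G₂ : ColGraph 2 2 p) : ColGraph 2 2 (m * p) where
  E i := Finset.univ.filter (fun e : Finset (Fin (m * p)) =>
    e.card = 2 ∧ e.image (fun x => (finProdFinEquiv.symm x).1) ∈ G₁.E i ∧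
      e.image (fun x => (finProdFinEquiv.symm x).2) ∈ G₂.E i)
  card_mem i e he := (Finset.mem_filter.mp he).2.1

def IsBipartite {n : ℕ} (G : ColGraph 2 2 n) : Prop :=
  ∀ i : Fin 2, ∃ part : Fin n → Bool, ∀ e ∈ G.E i, ∃ u ∈ e, ∃ v ∈ e, part u ≠ part v

def mk2 {n : ℕ} (R B : Finset (Finset (Fin n)))
    (hR : ∀ e ∈ R, e.card = 2) (hB : ∀ e ∈ B, e.card = 2) : ColGraph 2 2 n where
  E := fun i => if i = 0 then R else B
  card_mem := by
    intro i e he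
    try dsimp only at he
    split at he
    · exact hR e he
    · exact hB e he

def Tgraph : ColGraph 2 2 4 :=
  mk2 {{0,1},{0,2},{2,3}} {{0,1},{1,2},{2,3}} (by decide) (by decide)

def K3 : ColGraph 2 2 3 :=
  mk2 {{0,1},{0,2},{1,2}} {{0,1},{0,2},{1,2}} (by decide) (by decide)

def K3minus : ColGraph 2 2 3 :=
  mk2 {{0,1},{0,2},{1,2}} {{0,1},{0,2}} (by decide) (by decide)

def T1 : ColGraph 2 2 4 :=
  mk2 {{0,1},{2,3},{0,2},{1,3}} {{0,1},{2,3},{0,3},{1,2}} (by decide) (by decide)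

def T2 : ColGraph 2 2 4 :=
  mk2 {{0,1},{0,3},{1,2},{1,3},{2,3}} {{0,1},{0,2},{0,3},{1,2},{2,3}} (by decide) (by decide)

set_option maxRecDepth 40000 in
def H8 : ColGraph 2 2 8 :=
  mk2 {{0,1},{0,2},{1,3},{2,3},{0,5},{2,6},{3,7},{1,4},{2,4},{0,7},{3,5},{1,6}}
      {{4,5},{4,6},{5,7},{6,7},{1,5},{0,4},{3,6},{2,7},{2,4},{0,7},{3,5},{1,6}}
      (by decide) (by decide)

structure Graph23 (n : ℕ) where
  E2 : Finset (Finset (Fin n))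
  E3 : Finset (Finset (Fin n))
  card2 : ∀ e ∈ E2, e.card = 2
  card3 : ∀ e ∈ E3, e.card = 3

namespace Graph23

noncomputable def density {n : ℕ} (G : Graph23 n) : ℝ :=
  (G.E2.card : ℝ) / (n.choose 2 : ℝ) + (G.E3.card : ℝ) / (n.choose 3 : ℝ)

def IsSubgraph {m n : ℕ} (H : Graph23 m) (G : Graph23 n) : Prop :=
  ∃ f : Fin m → Fin n, Function.Injective f ∧
    (∀ e ∈ H.E2, e.image f ∈ G.E2) ∧ (∀ e ∈ H.E3, e.image f ∈ G.E3)

noncomputable def turanDensityN {m : ℕ} (H : Graph23 m) (n : ℕ) : ℝ :=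
  sSup {x : ℝ | ∃ G : Graph23 n, ¬ H.IsSubgraph G ∧ G.density = x}

end Graph23

def lift23 {m : ℕ} (H : ColGraph 2 2 m) : Graph23 (m + 1) where
  E2 := (H.E 0).image (fun e => e.image Fin.castSucc)
  E3 := (H.E 1).image (fun e => insert (Fin.last m) (e.image Fin.castSucc))
  card2 := by
    intro e he
    simp only [Finset.mem_image] at he
    obtain ⟨e0, he0, rfl⟩ := he
    rw [Finset.card_image_of_injective _ (Fin.castSucc_injective m)]
    exact H.card_mem 0 e0 he0
  card3 := by
    intro e he
    simp only [Finset.mem_image] at he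
    obtain ⟨e0, he0, rfl⟩ := he
    rw [Finset.card_insert_of_notMem (by
      intro h
      simp only [Finset.mem_image] at h
      obtain ⟨x, _, hx⟩ := h
      exact (Fin.castSucc_lt_last x).ne hx)]
    rw [Finset.card_image_of_injective _ (Fin.castSucc_injective m), H.card_mem 1 e0 he0]

def H5 : Graph23 5 where
  E2 := {{0,1},{0,2},{2,3}}
  E3 := {{0,1,4},{0,2,4},{2,3,4}}
  card2 := by decide
  card3 := by decide

/-!
Averaging over `m`-subsets, where `m` is fixed so large that `π_m(H) < π + a/2`. The densities of
the subgraphs induced on the `m`-sets average to `h_n(G) > π + a` and never exceed `k`, so a fixed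
positive proportion of the `m`-sets induce density above `π_m(H)` and hence contain a copy of `H`.
The vertex set of such a copy is a `v`-set inside the `m`-set, and a `v`-set lies in only
`C(n - v, m - v)` of the `m`-sets; since `C(n, m) C(m, v) = C(n, v) C(n - v, m - v)`, this gives
`≥ b C(n, v)` distinct `v`-sets carrying a copy of `H`.
-/

section Averaging

variable {ι R : Type*} [CommRing R] [LinearOrder R] [IsOrderedRing R]

theorem Finset.sum_sub_mul_card_le_mul_card_filter_lt (s : Finset ι) (f : ι → R) {K θ : R}
    (hK : ∀ i ∈ s, f i ≤ K) :
    ∑ i ∈ s, f i - θ * #s ≤ (K - θ) * #{i ∈ s | θ < f i} := by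
  have hlarge : ∑ i ∈ s with θ < f i, f i ≤ #{i ∈ s | θ < f i} * K :=
    by simpa using sum_le_card_nsmul _ f K fun i hi => hK i (mem_filter.1 hi).1
  have hsmall : ∑ i ∈ s with ¬θ < f i, f i ≤ #{i ∈ s | ¬θ < f i} * θ :=
    by simpa using sum_le_card_nsmul _ f θ fun i hi => not_lt.1 (mem_filter.1 hi).2
  have hcard : (#{i ∈ s | θ < f i} : R) + #{i ∈ s | ¬θ < f i} = #s := by
    rw [← Nat.cast_add, card_filter_add_card_filter_not]
  rw [← sum_filter_add_sum_filter_not s (θ < f ·)]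
  linear_combination hlarge + hsmall + θ * hcard

end Averaging

section Subsets

variable {α : Type*} [Fintype α] [DecidableEq α]

theorem Finset.sum_card_filter_subset_powersetCard {𝒜 : Finset (Finset α)} {r m : ℕ}
    (h𝒜 : ∀ e ∈ 𝒜, #e = r) (hrm : r ≤ m) :
    ∑ M ∈ powersetCard m univ, #{e ∈ 𝒜 | e ⊆ M} =
      #𝒜 * (Fintype.card α - r).choose (m - r) := by
  have := sum_card_bipartiteAbove_eq_sum_card_bipartiteBelow (s := powersetCard m univ) (t := 𝒜)
    (r := fun M e => e ⊆ M)
  simp only [bipartiteAbove, bipartiteBelow] at this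
  rw [this, sum_const_nat fun e he => ?_]
  rw [← h𝒜 e he, card_filter_powersetCard_subset _ _ _ (subset_univ e) (h𝒜 e he ▸ hrm),
    card_univ]

theorem Finset.card_mul_choose_le_of_forall_exists_subset {𝒜 ℬ : Finset (Finset α)} {m v : ℕ}
    (h𝒜 : ∀ A ∈ 𝒜, #A = m) (hℬ : ∀ B ∈ ℬ, #B = v) (hcover : ∀ A ∈ 𝒜, ∃ B ∈ ℬ, B ⊆ A) :
    #𝒜 * (Fintype.card α).choose v ≤ (Fintype.card α).choose m * m.choose v * #ℬ := by
  obtain rfl | ⟨A, hA⟩ := 𝒜.eq_empty_or_nonempty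
  · simp
  have hvm : v ≤ m := by
    obtain ⟨B, hB, hBA⟩ := hcover A hA
    exact hℬ B hB ▸ h𝒜 A hA ▸ card_le_card hBA
  have hsub : 𝒜 ⊆ ℬ.biUnion fun B => {M ∈ powersetCard m univ | B ⊆ M} := fun A hA => by
    obtain ⟨B, hB, hBA⟩ := hcover A hA
    exact mem_biUnion.2 ⟨B, hB, mem_filter.2 ⟨mem_powersetCard_univ.2 (h𝒜 A hA), hBA⟩⟩
  have hcard : #𝒜 ≤ #ℬ * (Fintype.card α - v).choose (m - v) := by
    refine (card_le_card hsub).trans (card_biUnion_le_card_mul _ _ _ fun B hB => ?_)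
    rw [card_filter_powersetCard_subset _ _ _ (subset_univ B) (hℬ B hB ▸ hvm), hℬ B hB,
      card_univ]
  calc #𝒜 * (Fintype.card α).choose v
      ≤ #ℬ * (Fintype.card α - v).choose (m - v) * (Fintype.card α).choose v :=
        Nat.mul_le_mul_right _ hcard
    _ = (Fintype.card α).choose m * m.choose v * #ℬ := by
        rw [Nat.choose_mul hvm]; ring

end Subsets

namespace ColGraph

variable {k r n v : ℕ}

theorem density_le (G : ColGraph k r n) : G.density ≤ k := by
  have hE : ∀ i, ((G.E i).card : ℝ) ≤ n.choose r := fun i => by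
    have := card_le_card fun e he => mem_powersetCard_univ.2 (G.card_mem i e he)
    simpa using this
  refine div_le_of_le_mul₀ (Nat.cast_nonneg _) (Nat.cast_nonneg _) ?_
  simpa using sum_le_sum fun i (_ : i ∈ univ) => hE i

theorem isSubgraph_of_turanDensityN_lt {H : ColGraph k r v} {G : ColGraph k r n}
    (h : H.turanDensityN n < G.density) : H.IsSubgraph G := by
  by_contra hHG
  have hbdd : BddAbove {x | ∃ G' : ColGraph k r n, ¬H.IsSubgraph G' ∧ G'.density = x} :=
    ⟨k, by rintro _ ⟨G', -, rfl⟩; exact G'.density_le⟩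
  exact h.not_ge (le_csSup hbdd ⟨G, hHG, rfl⟩)

def induce (G : ColGraph k r n) (M : Finset (Fin n)) : ColGraph k r #M where
  E i := {e | e.map (M.orderEmbOfFin rfl).toEmbedding ∈ G.E i}
  card_mem i e he := by simpa using G.card_mem i _ (mem_filter.1 he).2

theorem card_induce_E (G : ColGraph k r n) (M : Finset (Fin n)) (i : Fin k) :
    #((G.induce M).E i) = #{e ∈ G.E i | e ⊆ M} := by
  have : {e ∈ G.E i | e ⊆ M} =
      ((G.induce M).E i).map (mapEmbedding (M.orderEmbOfFin rfl).toEmbedding).toEmbedding := by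
    ext e
    have hM : univ.map (M.orderEmbOfFin rfl).toEmbedding = M := M.map_orderEmbOfFin_univ rfl
    simp only [induce, mem_filter, Finset.mem_map, mem_univ, true_and]
    constructor
    · rintro ⟨he, heM⟩
      obtain ⟨u, -, rfl⟩ := subset_map_iff.1 (hM ▸ heM)
      exact ⟨u, he, rfl⟩
    · rintro ⟨u, hu, rfl⟩
      exact ⟨hu, (map_subset_map.2 (subset_univ u)).trans hM.subset⟩
  rw [this, card_map]

theorem sum_density_induce (G : ColGraph k r n) {m : ℕ} (hrm : r ≤ m) (hmn : m ≤ n) :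
    ∑ M ∈ powersetCard m univ, (G.induce M).density = n.choose m * G.density := by
  have hcount : ∀ i, ∑ M ∈ powersetCard m (univ : Finset (Fin n)), (#{e ∈ G.E i | e ⊆ M} : ℝ) =
      #(G.E i) * (n - r).choose (m - r) := fun i => by
    exact_mod_cast (by simpa using sum_card_filter_subset_powersetCard (G.card_mem i) hrm)
  have hchoose : (n.choose m : ℝ) * m.choose r = n.choose r * (n - r).choose (m - r) := by
    exact_mod_cast Nat.choose_mul hrm
  have hmr : (m.choose r : ℝ) ≠ 0 := by exact_mod_cast (Nat.choose_pos hrm).ne'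
  have hnr : (n.choose r : ℝ) ≠ 0 := by exact_mod_cast (Nat.choose_pos (hrm.trans hmn)).ne'
  calc ∑ M ∈ powersetCard m univ, (G.induce M).density
      = ∑ M ∈ powersetCard m univ, (∑ i, (#{e ∈ G.E i | e ⊆ M} : ℝ)) / m.choose r :=
        sum_congr rfl fun M hM => by
          simp only [density, card_induce_E, (mem_powersetCard_univ.1 hM)]
    _ = (∑ i, (#(G.E i) : ℝ)) * (n - r).choose (m - r) / m.choose r := by
        rw [← sum_div, sum_comm, sum_mul]
        simp only [hcount]
    _ = n.choose m * G.density := by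
        rw [density]
        field_simp
        linear_combination -(∑ i, (#(G.E i) : ℝ)) * hchoose

theorem mul_choose_le_mul_card_dense_induce (G : ColGraph k r n) {m : ℕ} (hrm : r ≤ m)
    (hmn : m ≤ n) (θ : ℝ) :
    (G.density - θ) * n.choose m ≤
      (k - θ) * #{M ∈ powersetCard m univ | θ < (G.induce M).density} := by
  have := sum_sub_mul_card_le_mul_card_filter_lt (powersetCard m univ)
    (fun M => (G.induce M).density) (θ := θ) fun M _ => (G.induce M).density_le
  rw [sum_density_induce G hrm hmn, card_powersetCard, card_univ, Fintype.card_fin] at this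
  linarith

open Classical in
noncomputable def copySets (H : ColGraph k r v) (G : ColGraph k r n) : Finset (Finset (Fin n)) :=
  {S | #S = v ∧ ∃ f : Fin v → Fin n, Function.Injective f ∧ (∀ x, f x ∈ S) ∧
    ∀ i, ∀ e ∈ H.E i, e.image f ∈ G.E i}

theorem coe_copySets (H : ColGraph k r v) (G : ColGraph k r n) :
    (H.copySets G : Set (Finset (Fin n))) = {S | #S = v ∧ ∃ f : Fin v → Fin n,
      Function.Injective f ∧ (∀ x, f x ∈ S) ∧ ∀ i, ∀ e ∈ H.E i, e.image f ∈ G.E i} := by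
  simp [copySets]

theorem exists_mem_copySets_subset_of_isSubgraph_induce {H : ColGraph k r v}
    {G : ColGraph k r n} {M : Finset (Fin n)} (h : H.IsSubgraph (G.induce M)) :
    ∃ S ∈ H.copySets G, S ⊆ M := by
  obtain ⟨f, hf, hfE⟩ := h
  set g : Fin v ↪ Fin n := (⟨f, hf⟩ : Fin v ↪ Fin #M).trans (M.orderEmbOfFin rfl).toEmbedding
  refine ⟨univ.map g, ?_, fun x hx => ?_⟩
  · simp only [copySets, mem_filter, mem_univ, true_and, card_map, card_univ, Fintype.card_fin]
    refine ⟨g, g.injective, fun x => mem_map_of_mem g (mem_univ x), fun i e he => ?_⟩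
    have hfe := (mem_filter.1 (hfE i e he)).2
    rwa [map_eq_image, image_image] at hfe
  · obtain ⟨y, -, rfl⟩ := Finset.mem_map.1 hx
    exact M.orderEmbOfFin_mem rfl (f y)

theorem card_filter_lt_density_induce_mul_choose_le (H : ColGraph k r v) (G : ColGraph k r n)
    {m : ℕ} {θ : ℝ} (hθ : H.turanDensityN m ≤ θ) :
    #{M ∈ powersetCard m univ | θ < (G.induce M).density} * n.choose v ≤
      n.choose m * m.choose v * #(H.copySets G) := by
  simpa using card_mul_choose_le_of_forall_exists_subset
    (fun M hM => mem_powersetCard_univ.1 (mem_filter.1 hM).1)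
    (fun S hS => (mem_filter.1 hS).2.1)
    fun M hM => exists_mem_copySets_subset_of_isSubgraph_induce <|
      isSubgraph_of_turanDensityN_lt <| by
        obtain ⟨hMm, hθM⟩ := mem_filter.1 hM
        exact (mem_powersetCard_univ.1 hMm ▸ hθ).trans_lt hθM

end ColGraph

theorem colored_supersaturation_general {k r v : ℕ}
    (H : ColGraph k r v) (pi : ℝ)
    (hconv : Filter.Tendsto H.turanDensityN Filter.atTop (nhds pi)) :
    ∀ a : ℝ, 0 < a → ∃ b : ℝ, 0 < b ∧ ∃ n₀ : ℕ, ∀ n : ℕ, n₀ < n →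
      ∀ G : ColGraph k r n, pi + a < G.density →
        b * (n.choose v : ℝ) ≤
          ({S : Finset (Fin n) | S.card = v ∧ ∃ f : Fin v → Fin n,
              Function.Injective f ∧ (∀ x, f x ∈ S) ∧
              ∀ i : Fin k, ∀ e ∈ H.E i, e.image f ∈ G.E i}.ncard : ℝ) := by
  intro a ha
  obtain hk | hk := le_or_gt (k : ℝ) (pi + a)
  · exact ⟨1, one_pos, 0, fun n _ G hG => absurd (G.density_le.trans hk) hG.not_ge⟩
  obtain ⟨m, hHm, hvm, hrm⟩ : ∃ m, H.turanDensityN m < pi + a / 2 ∧ v ≤ m ∧ r ≤ m :=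
    ((hconv.eventually (gt_mem_nhds (by linarith))).and
      ((eventually_ge_atTop v).and (eventually_ge_atTop r))).exists
  have hkθ : 0 < (k : ℝ) - (pi + a / 2) := by linarith
  set θ := pi + a / 2 with hθ
  have hmv : (0 : ℝ) < m.choose v := by exact_mod_cast Nat.choose_pos hvm
  refine ⟨a / 2 / (k - θ) / m.choose v, by positivity, m, fun n hmn G hG => ?_⟩
  set 𝒜 := {M ∈ powersetCard m (univ : Finset (Fin n)) | θ < (G.induce M).density}
  have hdense : a / 2 * n.choose m ≤ (k - θ) * #𝒜 :=
    (mul_le_mul_of_nonneg_right (by linarith [hθ]) (Nat.cast_nonneg _)).trans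
      (G.mul_choose_le_mul_card_dense_induce hrm hmn.le θ)
  have hcover : (#𝒜 * n.choose v : ℝ) ≤ n.choose m * m.choose v * #(H.copySets G) := by
    exact_mod_cast H.card_filter_lt_density_induce_mul_choose_le G hHm.le
  have hnm : (0 : ℝ) < n.choose m := by exact_mod_cast Nat.choose_pos hmn.le
  rw [← H.coe_copySets G, Set.ncard_coe_finset, div_div, div_mul_eq_mul_div,
    div_le_iff₀ (by positivity)]
  refine le_of_mul_le_mul_left ?_ hnm
  calc n.choose m * (a / 2 * n.choose v)
      = a / 2 * n.choose m * n.choose v := by ring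
    _ ≤ (k - θ) * (#𝒜 * n.choose v) := by rw [← mul_assoc]; gcongr
    _ ≤ (k - θ) * (n.choose m * m.choose v * #(H.copySets G)) := by gcongr
    _ = n.choose m * (#(H.copySets G) * ((k - θ) * m.choose v)) := by ring

theorem colored_supersaturation {k r v : ℕ} (hr : 2 ≤ r) (hrk : r ≤ k)
    (H : ColGraph k r v) (pi : ℝ)
    (hconv : Filter.Tendsto H.turanDensityN Filter.atTop (nhds pi)) :
    ∀ a : ℝ, 0 < a → ∃ b : ℝ, 0 < b ∧ ∃ n₀ : ℕ, ∀ n : ℕ, n₀ < n →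
      ∀ G : ColGraph k r n, pi + a < G.density →
        b * (n.choose v : ℝ) ≤
          ({S : Finset (Fin n) | S.card = v ∧ ∃ f : Fin v → Fin n,
              Function.Injective f ∧ (∀ x, f x ∈ S) ∧
              ∀ i : Fin k, ∀ e ∈ H.E i, e.image f ∈ G.E i}.ncard : ℝ) :=
  colored_supersaturation_general H pi hconv
end

section
/- Let K_3 denote the 2-colored triangle on vertex set {1,2,3} in which each of the three pairs 12, 13, 23 is both a red edge and a blue edge. For every n ≥ 1, the maximum of |E_r(G)| + |E_b(G)| over all K_3-free 2-colored graphs G on n vertices equals C(n,2) + ⌊n²/4⌋. In particular, π_n(K_3) → 3/2 as n → ∞. -/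
open Finset Filter

/-! Write `R`, `B` for the two colour classes. Then `|R| + |B| = |R ∪ B| + |R ∩ B|`, and
`|R ∪ B| ≤ C(n,2)`. A copy of `K3` is the same thing as a triangle in the graph `R ∩ B`, so
Mantel's theorem bounds `|R ∩ B|` by `⌊n²/4⌋`. Both bounds are attained at once by taking `R` to be
all pairs and `B` the complete balanced bipartite graph. Since `4⌊n²/4⌋ ∈ {n², n² - 1}`, the
resulting density `1 + ⌊n²/4⌋ / C(n,2)` lies between `3/2` and `3/2 + 1/n`. -/

theorem Nat.four_mul_sq_div_four_add_mod_two (n : ℕ) : 4 * (n ^ 2 / 4) + n % 2 = n ^ 2 := by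
  obtain ⟨m, rfl | rfl⟩ := n.even_or_odd'
  · rw [mul_pow]; omega
  · rw [show (2 * m + 1) ^ 2 = 4 * (m ^ 2 + m) + 1 by ring]; omega

theorem Nat.sq_sub_sq_mod_two_div_four (n : ℕ) :
    (n ^ 2 - (n % 2) ^ 2) / 4 + (n % 2).choose 2 = n ^ 2 / 4 := by
  have := Nat.four_mul_sq_div_four_add_mod_two n
  rcases Nat.mod_two_eq_zero_or_one n with h | h
  · simp [h]
  · simp [h] at this ⊢
    omega

theorem Sym2.toFinset_injective {α : Type*} [DecidableEq α] :
    Function.Injective (Sym2.toFinset : Sym2 α → Finset α) := fun z w h =>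
  Sym2.ext fun x => by rw [← Sym2.mem_toFinset, h, Sym2.mem_toFinset]

namespace SimpleGraph

variable {V : Type*} [Fintype V] {Γ : SimpleGraph V} [DecidableRel Γ.Adj]

theorem CliqueFree.card_edgeFinset_le_sq_div_four (h : Γ.CliqueFree 3) :
    #Γ.edgeFinset ≤ Fintype.card V ^ 2 / 4 := by
  simpa [Nat.sq_sub_sq_mod_two_div_four] using h.card_edgeFinset_le (r := 2)

theorem card_edgeFinset_turanGraph_two (n : ℕ) :
    #(turanGraph n 2).edgeFinset = n ^ 2 / 4 := by
  simpa [Nat.sq_sub_sq_mod_two_div_four] using card_edgeFinset_turanGraph (n := n) (r := 2)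

variable [DecidableEq V]

/-- Mathlib's edges live in `Sym2 V`; `ColGraph` stores them as two-element finsets. -/
def edgePairs (Γ : SimpleGraph V) [DecidableRel Γ.Adj] : Finset (Finset V) :=
  Γ.edgeFinset.image Sym2.toFinset

theorem card_edgePairs : #Γ.edgePairs = #Γ.edgeFinset :=
  card_image_of_injective _ Sym2.toFinset_injective

theorem pair_mem_edgePairs {u v : V} : {u, v} ∈ Γ.edgePairs ↔ Γ.Adj u v := by
  rw [← Sym2.toFinset_mk_eq, edgePairs, Sym2.toFinset_injective.mem_finset_image,
    mem_edgeFinset, mem_edgeSet]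

theorem card_of_mem_edgePairs {e : Finset V} (he : e ∈ Γ.edgePairs) : #e = 2 := by
  obtain ⟨z, hz, rfl⟩ := mem_image.mp he
  exact Sym2.card_toFinset_of_not_isDiag z (Γ.not_isDiag_of_mem_edgeSet (mem_edgeFinset.mp hz))

end SimpleGraph

namespace ColGraph

variable {k m n : ℕ}

def commonGraph (G : ColGraph k 2 n) : SimpleGraph (Fin n) where
  Adj u v := u ≠ v ∧ ∀ i, {u, v} ∈ G.E i
  symm := ⟨fun u v h => ⟨h.1.symm, fun i => pair_comm u v ▸ h.2 i⟩⟩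
  loopless := ⟨fun _ h => h.1 rfl⟩

@[simp]
theorem commonGraph_adj {G : ColGraph k 2 n} {u v : Fin n} :
    G.commonGraph.Adj u v ↔ u ≠ v ∧ ∀ i, {u, v} ∈ G.E i :=
  Iff.rfl

instance (G : ColGraph k 2 n) : DecidableRel G.commonGraph.Adj := fun u v =>
  inferInstanceAs (Decidable (u ≠ v ∧ ∀ i, {u, v} ∈ G.E i))

theorem isSubgraph_iff_not_cliqueFree {H : ColGraph k 2 m}
    (hH : ∀ i, H.E i = univ.powersetCard 2)
    (G : ColGraph k 2 n) : H.IsSubgraph G ↔ ¬ G.commonGraph.CliqueFree m := by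
  have mem_H {x y : Fin m} (hxy : x ≠ y) (i : Fin k) : {x, y} ∈ H.E i := by
    simp [hH, card_pair hxy]
  rw [SimpleGraph.cliqueFree_iff, not_isEmpty_iff]
  constructor
  · rintro ⟨f, hf, hE⟩
    refine ⟨⟨⟨f, fun {x y} hxy => commonGraph_adj.mpr ⟨hf.ne hxy, fun i => ?_⟩⟩, hf⟩⟩
    simpa [image_insert] using hE i _ (mem_H hxy i)
  · rintro ⟨φ⟩
    refine ⟨φ, φ.injective, fun i e he => ?_⟩
    obtain ⟨x, y, hxy, rfl⟩ := card_eq_two.mp (H.card_mem i e he)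
    simpa [image_insert] using (commonGraph_adj.mp (φ.toHom.map_adj hxy)).2 i

theorem K3_isSubgraph_iff (G : ColGraph 2 2 n) :
    K3.IsSubgraph G ↔ ¬ G.commonGraph.CliqueFree 3 :=
  isSubgraph_iff_not_cliqueFree (by decide) G

theorem card_inter_le_card_edgeFinset_commonGraph (G : ColGraph 2 2 n) :
    #(G.E 0 ∩ G.E 1) ≤ #G.commonGraph.edgeFinset := by
  rw [← SimpleGraph.card_edgePairs]
  refine card_le_card fun e he => ?_
  obtain ⟨he₀, he₁⟩ := mem_inter.mp he
  obtain ⟨u, v, huv, rfl⟩ := card_eq_two.mp (G.card_mem 0 _ he₀)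
  exact SimpleGraph.pair_mem_edgePairs.mpr <|
    commonGraph_adj.mpr ⟨huv, Fin.forall_fin_two.mpr ⟨he₀, he₁⟩⟩

theorem card_add_card_le (G : ColGraph 2 2 n) :
    #(G.E 0) + #(G.E 1) ≤ n.choose 2 + #G.commonGraph.edgeFinset := by
  have h_union : #(G.E 0 ∪ G.E 1) ≤ n.choose 2 := by
    simpa using card_le_card (s := G.E 0 ∪ G.E 1) (t := univ.powersetCard 2) fun e he => by
      rcases mem_union.mp he with he | he <;> simp [G.card_mem _ e he]
  rw [← card_union_add_card_inter]
  exact add_le_add h_union G.card_inter_le_card_edgeFinset_commonGraph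

theorem card_add_card_le_of_K3_free {G : ColGraph 2 2 n} (hG : ¬ K3.IsSubgraph G) :
    #(G.E 0) + #(G.E 1) ≤ n.choose 2 + n ^ 2 / 4 := by
  have hG' : G.commonGraph.CliqueFree 3 := not_not.mp (mt (K3_isSubgraph_iff G).mpr hG)
  calc #(G.E 0) + #(G.E 1) ≤ n.choose 2 + #G.commonGraph.edgeFinset := G.card_add_card_le
    _ ≤ n.choose 2 + n ^ 2 / 4 := by
      gcongr
      simpa using hG'.card_edgeFinset_le_sq_div_four

def ofSimpleGraphs (Γ₀ Γ₁ : SimpleGraph (Fin n)) [DecidableRel Γ₀.Adj] [DecidableRel Γ₁.Adj] :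
    ColGraph 2 2 n :=
  mk2 Γ₀.edgePairs Γ₁.edgePairs (fun _ => SimpleGraph.card_of_mem_edgePairs)
    (fun _ => SimpleGraph.card_of_mem_edgePairs)

section ofSimpleGraphs

variable (Γ₀ Γ₁ : SimpleGraph (Fin n)) [DecidableRel Γ₀.Adj] [DecidableRel Γ₁.Adj]

theorem card_ofSimpleGraphs :
    #((ofSimpleGraphs Γ₀ Γ₁).E 0) + #((ofSimpleGraphs Γ₀ Γ₁).E 1) =
      #Γ₀.edgeFinset + #Γ₁.edgeFinset := by
  simp [ofSimpleGraphs, mk2, SimpleGraph.card_edgePairs]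

theorem commonGraph_ofSimpleGraphs_le_right : (ofSimpleGraphs Γ₀ Γ₁).commonGraph ≤ Γ₁ :=
  fun _ _ h =>
    SimpleGraph.pair_mem_edgePairs.mp (by simpa [ofSimpleGraphs, mk2] using h.2 1)

end ofSimpleGraphs

theorem not_K3_isSubgraph_ofSimpleGraphs_turanGraph :
    ¬ K3.IsSubgraph (ofSimpleGraphs ⊤ (SimpleGraph.turanGraph n 2)) := by
  rw [K3_isSubgraph_iff, not_not]
  exact (SimpleGraph.turanGraph_cliqueFree two_pos).anti (commonGraph_ofSimpleGraphs_le_right _ _)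

theorem card_ofSimpleGraphs_turanGraph :
    #((ofSimpleGraphs ⊤ (SimpleGraph.turanGraph n 2)).E 0) +
      #((ofSimpleGraphs ⊤ (SimpleGraph.turanGraph n 2)).E 1) = n.choose 2 + n ^ 2 / 4 := by
  rw [card_ofSimpleGraphs, SimpleGraph.card_edgeFinset_top_eq_card_choose_two, Fintype.card_fin,
    SimpleGraph.card_edgeFinset_turanGraph_two]

theorem isGreatest_card_of_K3_free (n : ℕ) :
    IsGreatest {N : ℕ | ∃ G : ColGraph 2 2 n, ¬ K3.IsSubgraph G ∧
      #(G.E 0) + #(G.E 1) = N} (n.choose 2 + n ^ 2 / 4) :=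
  ⟨⟨_, not_K3_isSubgraph_ofSimpleGraphs_turanGraph, card_ofSimpleGraphs_turanGraph⟩,
    fun _ ⟨_, hG, hN⟩ => hN ▸ card_add_card_le_of_K3_free hG⟩

theorem K3_turanDensityN (n : ℕ) :
    K3.turanDensityN n = ((n.choose 2 + n ^ 2 / 4 : ℕ) : ℝ) / n.choose 2 := by
  have hdiv : Monotone fun N : ℕ => (N : ℝ) / n.choose 2 := fun _ _ h =>
    div_le_div_of_nonneg_right (Nat.cast_le.mpr h) (Nat.cast_nonneg _)
  have hset : {x : ℝ | ∃ G : ColGraph 2 2 n, ¬ K3.IsSubgraph G ∧ G.density = x} =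
      (fun N : ℕ => (N : ℝ) / n.choose 2) ''
        {N | ∃ G : ColGraph 2 2 n, ¬ K3.IsSubgraph G ∧ #(G.E 0) + #(G.E 1) = N} := by
    ext x
    simp [density, Fin.sum_univ_two]
  rw [turanDensityN, hset, (hdiv.map_isGreatest (isGreatest_card_of_K3_free n)).csSup_eq]

theorem K3_turanDensityN_mem_Icc {n : ℕ} (hn : 2 ≤ n) :
    K3.turanDensityN n ∈ Set.Icc (3 / 2 : ℝ) (3 / 2 + 1 / n) := by
  have hc : ((n.choose 2 : ℕ) : ℝ) = n * (n - 1) / 2 := Nat.cast_choose_two ℝ n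
  have hq : 4 * ((n ^ 2 / 4 : ℕ) : ℝ) + (n % 2 : ℕ) = n ^ 2 := by
    exact_mod_cast Nat.four_mul_sq_div_four_add_mod_two n
  have hr : ((n % 2 : ℕ) : ℝ) ≤ 1 := by exact_mod_cast Nat.le_of_lt_succ (Nat.mod_lt n two_pos)
  have hn' : (2 : ℝ) ≤ n := by exact_mod_cast hn
  have hcpos : (0 : ℝ) < n.choose 2 := by exact_mod_cast Nat.choose_pos hn
  rw [K3_turanDensityN, Nat.cast_add]
  constructor
  · rw [le_div_iff₀ hcpos, hc]
    nlinarith [(Nat.cast_nonneg (n % 2) : (0 : ℝ) ≤ _)]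
  · rw [div_le_iff₀ hcpos, hc]
    field_simp
    nlinarith [(Nat.cast_nonneg (n % 2) : (0 : ℝ) ≤ _)]

theorem tendsto_K3_turanDensityN : Tendsto K3.turanDensityN atTop (nhds (3 / 2 : ℝ)) := by
  have hupper : Tendsto (fun n : ℕ => 3 / 2 + 1 / (n : ℝ)) atTop (nhds (3 / 2)) := by
    simpa using
      (tendsto_const_nhds (x := (3 / 2 : ℝ))).add (tendsto_one_div_atTop_nhds_zero_nat (𝕜 := ℝ))
  refine tendsto_of_tendsto_of_tendsto_of_le_of_le' tendsto_const_nhds hupper ?_ ?_ <;>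
    filter_upwards [eventually_ge_atTop 2] with n hn
  exacts [(K3_turanDensityN_mem_Icc hn).1, (K3_turanDensityN_mem_Icc hn).2]

end ColGraph

theorem K3_extremal :
    (∀ n : ℕ, 1 ≤ n →
      IsGreatest {N : ℕ | ∃ G : ColGraph 2 2 n, ¬ K3.IsSubgraph G ∧
          (G.E 0).card + (G.E 1).card = N} (n.choose 2 + n ^ 2 / 4)) ∧
    Filter.Tendsto K3.turanDensityN Filter.atTop (nhds (3 / 2)) :=
  ⟨fun n _ => ColGraph.isGreatest_card_of_K3_free n, ColGraph.tendsto_K3_turanDensityN⟩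
end

section
/- Let T be the 2-colored graph with vertex set {1,2,3,4}, red edges {12, 13, 34} and blue edges {12, 23, 34}. Every T-free 2-colored graph G on n vertices satisfies |E_r(G)| + |E_b(G)| ≤ C(n+1, 2). Consequently π_n(T) → 1 as n → ∞, i.e., T is degenerate. -/
open Finset Filter

/-! Call a pair *doubled* if it is both red and blue and *missing* if it has neither colour.
If `w x y z` is a path of doubled pairs, a red `xz` completes a copy of `T` on `z y x w` and a
blue `xz` one on `y z x w`, so in a `T`-free graph `xz` is missing.

A graph on a vertex set `V` in which every path `w x y z` has a missing chord `xz` has at most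
`|V| + #missing` edges. If all degrees are at most `2` this is the handshake lemma. Otherwise let
`v` have maximum degree and `u` be a neighbour of `v`: when `u` has a second neighbour, every other
neighbour of `v` forms a missing pair with `u`, so `deg u ≤ deg v ≤ #missing at u + 1`, and we
delete `u` and induct. Applied to the doubled pairs this gives `|E_r| + |E_b| ≤ C(n,2) + n`.
The density is then squeezed between `1` (all pairs red) and `1 + 2 / (n - 1)`. -/

lemma Nat.add_one_choose_two (n : ℕ) : (n + 1).choose 2 = n + n.choose 2 := by
  rw [Nat.choose_succ_succ', Nat.choose_one_right]

namespace Finset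

variable {α : Type*} [DecidableEq α]

lemma pair_right_injective (v : α) : Function.Injective fun z : α => ({v, z} : Finset α) := by
  intro z z' h
  have hz : z ∈ ({v, z'} : Finset α) := by simp [← show ({v, z} : Finset α) = {v, z'} from h]
  have hz' : z' ∈ ({v, z} : Finset α) := by simp [show ({v, z} : Finset α) = {v, z'} from h]
  grind

lemma ne_of_pair_mem {F : Finset (Finset α)} (hF : ∀ e ∈ F, #e = 2) {a b : α}
    (h : {a, b} ∈ F) : a ≠ b :=
  card_pair_eq_two_iff.mp (hF _ h)

def neighborsIn (F : Finset (Finset α)) (V : Finset α) (v : α) : Finset α :=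
  {z ∈ V | {v, z} ∈ F}

section Pairs

variable {F : Finset (Finset α)} {V : Finset α}

lemma image_neighborsIn (hF : ∀ e ∈ F, #e = 2) {v : α} (hv : v ∈ V) :
    (neighborsIn F V v).image (fun z => {v, z}) = {e ∈ F | e ⊆ V ∧ v ∈ e} := by
  ext e
  simp only [neighborsIn, mem_image, mem_filter]
  constructor
  · rintro ⟨z, ⟨hz, he⟩, rfl⟩
    exact ⟨he, insert_subset hv (singleton_subset_iff.mpr hz), mem_insert_self v _⟩
  · rintro ⟨he, heV, hve⟩
    obtain ⟨x, y, -, rfl⟩ := card_eq_two.mp (hF e he)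
    rcases mem_insert.mp hve with rfl | hy
    · exact ⟨y, ⟨heV (by simp), he⟩, rfl⟩
    · rw [mem_singleton.mp hy, pair_comm] at *
      exact ⟨x, ⟨heV (by simp), he⟩, rfl⟩

lemma card_neighborsIn (hF : ∀ e ∈ F, #e = 2) {v : α} (hv : v ∈ V) :
    #(neighborsIn F V v) = #{e ∈ F | e ⊆ V ∧ v ∈ e} := by
  rw [← image_neighborsIn hF hv, card_image_of_injective _ (pair_right_injective v)]

lemma card_filter_subset_eq_erase_add (hF : ∀ e ∈ F, #e = 2) {u : α} (hu : u ∈ V) :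
    #{e ∈ F | e ⊆ V} = #{e ∈ F | e ⊆ V.erase u} + #(neighborsIn F V u) := by
  rw [card_neighborsIn hF hu, ← card_filter_add_card_filter_not (fun e => u ∉ e), filter_filter,
    filter_filter]
  congr 2 <;> ext e <;> simp [subset_erase]

lemma two_mul_card_filter_subset (hF : ∀ e ∈ F, #e = 2) :
    2 * #{e ∈ F | e ⊆ V} = ∑ v ∈ V, #(neighborsIn F V v) := by
  calc 2 * #{e ∈ F | e ⊆ V}
      = ∑ e ∈ F with e ⊆ V, #(V.bipartiteBelow (· ∈ ·) e) := by
        rw [mul_comm, ← smul_eq_mul, ← sum_const]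
        refine sum_congr rfl fun e he => ?_
        obtain ⟨heF, heV⟩ := mem_filter.mp he
        rw [bipartiteBelow, filter_mem_eq_inter, inter_eq_right.mpr heV, hF e heF]
    _ = ∑ v ∈ V, #({e ∈ F | e ⊆ V}.bipartiteAbove (· ∈ ·) v) :=
        (sum_card_bipartiteAbove_eq_sum_card_bipartiteBelow _).symm
    _ = ∑ v ∈ V, #(neighborsIn F V v) := by
        refine sum_congr rfl fun v hv => ?_
        rw [card_neighborsIn hF hv, bipartiteAbove, filter_filter]

lemma card_filter_subset_le_of_card_neighborsIn_le_two (hF : ∀ e ∈ F, #e = 2)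
    (hV : ∀ v ∈ V, #(neighborsIn F V v) ≤ 2) : #{e ∈ F | e ⊆ V} ≤ #V := by
  have := sum_le_sum hV
  rw [← two_mul_card_filter_subset hF, sum_const, smul_eq_mul] at this
  omega

end Pairs

section PathChords

variable {D M : Finset (Finset α)}

lemma exists_card_neighborsIn_le_succ (hD : ∀ e ∈ D, #e = 2) (hDM : Disjoint D M)
    (hP : ∀ w x y z : α, w ≠ y → x ≠ z → w ≠ z → {w, x} ∈ D → {x, y} ∈ D → {y, z} ∈ D →
      {x, z} ∈ M)
    {V : Finset α} (hV : ∃ v ∈ V, 2 < #(neighborsIn D V v)) :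
    ∃ u ∈ V, #(neighborsIn D V u) ≤ #(neighborsIn M V u) + 1 := by
  obtain ⟨v₁, hv₁, h2⟩ := hV
  obtain ⟨v, hv, hmax⟩ := exists_max_image V (fun v => #(neighborsIn D V v)) ⟨v₁, hv₁⟩
  set N := neighborsIn D V v
  have hN : 2 < #N := h2.trans_le (hmax v₁ hv₁)
  obtain ⟨u, huN⟩ := card_pos.mp (by omega : 0 < #N)
  obtain ⟨hu, hvu⟩ := mem_filter.mp huN
  refine ⟨u, hu, ?_⟩
  by_cases hdeg : #(neighborsIn D V u) ≤ 1
  · omega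
  obtain ⟨w, hw, hwv⟩ := exists_mem_ne (by omega : 1 < #(neighborsIn D V u)) v
  have huw : {u, w} ∈ D := (mem_filter.mp hw).2
  -- a third neighbour `t` of `v` would make `t v u z` a path with the edge `vz` as its chord
  have hchord : ∀ z ∈ N, z ≠ u → {u, z} ∉ D := by
    intro z hz hzu huz
    obtain ⟨t, htN, htuz⟩ :=
      exists_mem_notMem_of_card_lt_card (card_le_two.trans_lt hN : #{u, z} < #N)
    have hvz := (mem_filter.mp hz).2
    have hvt := (mem_filter.mp htN).2
    obtain ⟨htu, htz⟩ : t ≠ u ∧ t ≠ z := by simpa using htuz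
    rw [pair_comm] at hvt
    exact disjoint_left.mp hDM hvz (hP t v u z htu (ne_of_pair_mem hD hvz) htz hvt hvu huz)
  have hsub : N.erase u ⊆ neighborsIn M V u := by
    intro z hz
    obtain ⟨hzu, hzN⟩ := mem_erase.mp hz
    obtain ⟨hzV, hvz⟩ := mem_filter.mp hzN
    have hwz : w ≠ z := fun h => hchord z hzN hzu (h ▸ huw)
    refine mem_filter.mpr ⟨hzV, hP w u v z hwv (Ne.symm hzu) hwz ?_ ?_ hvz⟩
    · rwa [pair_comm]
    · rwa [pair_comm]
  calc #(neighborsIn D V u) ≤ #N := hmax u hu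
    _ = #(N.erase u) + 1 := (card_erase_add_one huN).symm
    _ ≤ #(neighborsIn M V u) + 1 := by gcongr

theorem card_filter_subset_le_card_add (hD : ∀ e ∈ D, #e = 2) (hM : ∀ e ∈ M, #e = 2)
    (hDM : Disjoint D M)
    (hP : ∀ w x y z : α, w ≠ y → x ≠ z → w ≠ z → {w, x} ∈ D → {x, y} ∈ D → {y, z} ∈ D →
      {x, z} ∈ M)
    (V : Finset α) : #{e ∈ D | e ⊆ V} ≤ #V + #{e ∈ M | e ⊆ V} := by
  induction V using strongInduction with
  | H V ih =>
  by_cases hdeg : ∀ v ∈ V, #(neighborsIn D V v) ≤ 2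
  · exact (card_filter_subset_le_of_card_neighborsIn_le_two hD hdeg).trans (Nat.le_add_right _ _)
  push Not at hdeg
  obtain ⟨u, hu, hu_le⟩ := exists_card_neighborsIn_le_succ hD hDM hP hdeg
  have := ih (V.erase u) (erase_ssubset hu)
  rw [card_filter_subset_eq_erase_add hD hu, card_filter_subset_eq_erase_add hM hu,
    ← card_erase_add_one hu]
  omega

end PathChords

end Finset

namespace ColGraph

variable {n : ℕ}

lemma tgraph_isSubgraph_of (G : ColGraph 2 2 n) {a b c d : Fin n} (had : a ≠ d) (hbd : b ≠ d)
    (hab : {a, b} ∈ G.E 0 ∩ G.E 1) (hcd : {c, d} ∈ G.E 0 ∩ G.E 1)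
    (hac : {a, c} ∈ G.E 0) (hbc : {b, c} ∈ G.E 1) : Tgraph.IsSubgraph G := by
  rw [mem_inter] at hab hcd
  have := ne_of_pair_mem (G.card_mem 0) hab.1
  have := ne_of_pair_mem (G.card_mem 0) hcd.1
  have := ne_of_pair_mem (G.card_mem 0) hac
  have := ne_of_pair_mem (G.card_mem 1) hbc
  have hinj : Function.Injective ![a, b, c, d] := by
    simp [Function.Injective, Fin.forall_fin_succ, *, Ne.symm]
  refine ⟨_, hinj, fun i e he => ?_⟩
  fin_cases i <;> simp [Tgraph, mk2] at he <;>
    rcases he with rfl | rfl | rfl <;> simp [image_insert, *]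

lemma chord_notMem_of_doubled_path (G : ColGraph 2 2 n) (hfree : ¬ Tgraph.IsSubgraph G)
    {w x y z : Fin n} (hwy : w ≠ y) (hwz : w ≠ z) (hwx : {w, x} ∈ G.E 0 ∩ G.E 1)
    (hxy : {x, y} ∈ G.E 0 ∩ G.E 1) (hyz : {y, z} ∈ G.E 0 ∩ G.E 1) :
    {x, z} ∉ G.E 0 ∪ G.E 1 := by
  rw [pair_comm] at hwx
  rw [mem_union, pair_comm x z]
  rintro (hred | hblue)
  · exact hfree <| G.tgraph_isSubgraph_of hwz.symm hwy.symm (by rwa [pair_comm]) hwx hred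
      (by rw [pair_comm]; exact (mem_inter.mp hxy).2)
  · exact hfree <| G.tgraph_isSubgraph_of hwy.symm hwz.symm hyz hwx
      (by rw [pair_comm]; exact (mem_inter.mp hxy).1) hblue

theorem card_add_card_le_of_tgraph_free (G : ColGraph 2 2 n) (hfree : ¬ Tgraph.IsSubgraph G) :
    #(G.E 0) + #(G.E 1) ≤ (n + 1).choose 2 := by
  set P := (univ : Finset (Fin n)).powersetCard 2
  have hsub : G.E 0 ∪ G.E 1 ⊆ P := by
    intro e he
    refine mem_powersetCard.mpr ⟨subset_univ e, ?_⟩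
    rcases mem_union.mp he with h | h
    exacts [G.card_mem 0 e h, G.card_mem 1 e h]
  have hcount := card_filter_subset_le_card_add (D := G.E 0 ∩ G.E 1) (M := P \ (G.E 0 ∪ G.E 1))
    (fun e he => G.card_mem 0 e (mem_inter.mp he).1)
    (fun e he => (mem_powersetCard.mp (mem_sdiff.mp he).1).2)
    (disjoint_sdiff.mono_left inter_subset_union)
    (fun w x y z hwy hxz hwz hwx hxy hyz => mem_sdiff.mpr
      ⟨mem_powersetCard.mpr ⟨subset_univ _, card_pair hxz⟩,
        G.chord_notMem_of_doubled_path hfree hwy hwz hwx hxy hyz⟩) univ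
  have hP : #P = n.choose 2 := by simp [P]
  simp only [subset_univ, filter_true] at hcount
  rw [card_sdiff_of_subset hsub, hP, card_univ, Fintype.card_fin] at hcount
  have := card_union_add_card_inter (G.E 0) (G.E 1)
  have := hP ▸ card_le_card hsub
  rw [Nat.add_one_choose_two]
  omega

lemma density_le_of_tgraph_free (hn : 2 ≤ n) (G : ColGraph 2 2 n)
    (hfree : ¬ Tgraph.IsSubgraph G) : G.density ≤ 1 + 2 / ((n : ℝ) - 1) := by
  have hcard := G.card_add_card_le_of_tgraph_free hfree
  rw [Nat.add_one_choose_two] at hcard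
  have hcard' : (#(G.E 0) + #(G.E 1) : ℝ) ≤ n + n.choose 2 := by exact_mod_cast hcard
  have hn1 : (n : ℝ) - 1 ≠ 0 := by
    have : (2 : ℝ) ≤ n := by exact_mod_cast hn
    linarith
  have hchoose : 2 / ((n : ℝ) - 1) * n.choose 2 = n := by
    rw [Nat.cast_choose_two]
    field_simp
  rw [density, Fin.sum_univ_two, div_le_iff₀ (by exact_mod_cast Nat.choose_pos hn), add_mul,
    one_mul, hchoose]
  linarith

def redComplete (n : ℕ) : ColGraph 2 2 n :=
  mk2 (univ.powersetCard 2) ∅ (fun _ he => (mem_powersetCard.mp he).2) (by simp)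

lemma not_tgraph_isSubgraph_redComplete : ¬ Tgraph.IsSubgraph (redComplete n) := by
  rintro ⟨f, -, hf⟩
  simpa [redComplete, mk2] using hf 1 {0, 1} (by decide)

lemma density_redComplete (hn : 2 ≤ n) : (redComplete n).density = 1 := by
  rw [density, Fin.sum_univ_two]
  simp [redComplete, mk2, (Nat.choose_pos hn).ne']

lemma one_le_turanDensityN_tgraph (hn : 2 ≤ n) : 1 ≤ Tgraph.turanDensityN n := by
  refine le_csSup ⟨1 + 2 / ((n : ℝ) - 1), ?_⟩
    ⟨redComplete n, not_tgraph_isSubgraph_redComplete, density_redComplete hn⟩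
  rintro _ ⟨G, hfree, rfl⟩
  exact density_le_of_tgraph_free hn G hfree

lemma turanDensityN_tgraph_le (hn : 2 ≤ n) :
    Tgraph.turanDensityN n ≤ 1 + 2 / ((n : ℝ) - 1) := by
  refine csSup_le ⟨1, redComplete n, not_tgraph_isSubgraph_redComplete, density_redComplete hn⟩ ?_
  rintro _ ⟨G, hfree, rfl⟩
  exact density_le_of_tgraph_free hn G hfree

end ColGraph

theorem T_degenerate :
    (∀ n : ℕ, ∀ G : ColGraph 2 2 n, ¬ Tgraph.IsSubgraph G →
      (G.E 0).card + (G.E 1).card ≤ (n + 1).choose 2) ∧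
    Filter.Tendsto Tgraph.turanDensityN Filter.atTop (nhds 1) := by
  refine ⟨fun n G hfree => G.card_add_card_le_of_tgraph_free hfree, ?_⟩
  have hsub : Tendsto (fun n : ℕ => (n : ℝ) - 1) atTop atTop :=
    tendsto_atTop_add_const_right _ _ tendsto_natCast_atTop_atTop
  have hupper : Tendsto (fun n : ℕ => 1 + 2 / ((n : ℝ) - 1)) atTop (nhds 1) := by
    simpa using tendsto_const_nhds.add (tendsto_const_nhds.div_atTop hsub)
  exact tendsto_of_tendsto_of_tendsto_of_le_of_le' tendsto_const_nhds hupper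
    (eventually_atTop.mpr ⟨2, fun _ => ColGraph.one_le_turanDensityN_tgraph⟩)
    (eventually_atTop.mpr ⟨2, fun _ => ColGraph.turanDensityN_tgraph_le⟩)
end

section
/- Let H_5 be the {2,3}-graph with vertex set {1,2,3,4,5}, 2-edges {12, 13, 34} and 3-edges {125, 135, 345}. Then the maximum of h_n(G) over all H_5-free {2,3}-graphs G on n vertices tends to 1 as n → ∞; that is, π(H_5) = 1 and H_5 is a degenerate {2,3}-graph. -/
open Finset Filter

/-!
The pairs `p ∈ E₂` with `p ∪ {v} ∈ E₃` form the link graph of a vertex `v`, and a copy of `H5` is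
precisely a vertex whose link contains a path `a - u - w - b` with three edges. A graph with more
than `2n` edges has an edge whose endpoints both have degree at least `3`, which extends to such a
path; so in an `H5`-free `G` every link has at most `2n` edges. Counting the pairs `(p, v)` with
`p ∈ E₂`, `v ∉ p`: those with `p ∪ {v} ∉ E₃` number at most three per triple missing from `E₃`,
and the others are the link edges. Hence `|E₂|(n - 2) + 3|E₃| ≤ 3 C(n,3) + 2n²`, which says
`h_n(G) ≤ 1 + O(1/n)`; the complete 3-graph shows `h_n ≥ 1`.
-/

section SetFamily

variable {α : Type*} [Fintype α] [DecidableEq α]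

def pairLink (E2 E3 : Finset (Finset α)) (v : α) : Finset (Finset α) :=
  E2.filter fun p => v ∉ p ∧ insert v p ∈ E3

lemma sum_card_filter_insert_mem_eq_sum_card_pairLink (E2 E3 : Finset (Finset α)) :
    ∑ p ∈ E2, (pᶜ.filter fun v => insert v p ∈ E3).card = ∑ v, (pairLink E2 E3 v).card := by
  simp only [card_eq_sum_ones]
  exact sum_comm' fun p v => by simp [pairLink]

lemma sum_card_filter_insert_notMem_le {E2 E3 : Finset (Finset α)}
    (hE2 : ∀ p ∈ E2, p.card = 2) (hE3 : ∀ t ∈ E3, t.card = 3) :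
    ∑ p ∈ E2, (pᶜ.filter fun v => insert v p ∉ E3).card
      ≤ 3 * ((Fintype.card α).choose 3 - E3.card) := by
  have hE3sub : E3 ⊆ univ.powersetCard 3 := fun t ht =>
    mem_powersetCard.mpr ⟨subset_univ t, hE3 t ht⟩
  set T := univ.powersetCard 3 \ E3
  have hT : ∑ t ∈ T, t.card = 3 * ((Fintype.card α).choose 3 - E3.card) := by
    rw [sum_congr rfl fun t ht => (mem_powersetCard.mp (mem_sdiff.mp ht).1).2, sum_const,
      card_sdiff_of_subset hE3sub, card_powersetCard, card_univ, smul_eq_mul, mul_comm]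
  rw [← card_sigma, ← hT, ← card_sigma]
  -- `p` is recovered from `insert v p` and `v`
  refine card_le_card_of_injOn (fun x => ⟨insert x.2 x.1, x.2⟩) ?_ ?_
  · rintro ⟨p, v⟩ h
    simp only [coe_sigma, Set.mem_sigma_iff, mem_coe, mem_filter, mem_compl] at h ⊢
    refine ⟨mem_sdiff.mpr ⟨mem_powersetCard.mpr ⟨subset_univ _, ?_⟩, h.2.2⟩, mem_insert_self _ _⟩
    rw [card_insert_of_notMem h.2.1, hE2 p h.1]
  · rintro ⟨p, v⟩ h ⟨q, w⟩ h' heq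
    simp only [coe_sigma, Set.mem_sigma_iff, mem_coe, mem_filter, mem_compl,
      Sigma.mk.injEq] at h h' heq
    obtain ⟨hins, rfl⟩ := heq
    rw [← erase_insert h.2.1, ← erase_insert h'.2.1, hins]

lemma card_mul_sub_two_add_three_mul_card_le {E2 E3 : Finset (Finset α)}
    (hE2 : ∀ p ∈ E2, p.card = 2) (hE3 : ∀ t ∈ E3, t.card = 3) :
    E2.card * (Fintype.card α - 2) + 3 * E3.card
      ≤ 3 * (Fintype.card α).choose 3 + ∑ v, (pairLink E2 E3 v).card := by
  have hsplit : E2.card * (Fintype.card α - 2) = ∑ p ∈ E2,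
      ((pᶜ.filter fun v => insert v p ∈ E3).card + (pᶜ.filter fun v => insert v p ∉ E3).card) := by
    rw [card_eq_sum_ones, sum_mul]
    refine sum_congr rfl fun p hp => ?_
    rw [card_filter_add_card_filter_not, card_compl, hE2 p hp, one_mul]
  have hE3le : E3.card ≤ (Fintype.card α).choose 3 := by
    simpa using card_le_card (fun t ht => mem_powersetCard.mpr ⟨subset_univ t, hE3 t ht⟩ :
      E3 ⊆ univ.powersetCard 3)
  rw [hsplit, sum_add_distrib, sum_card_filter_insert_mem_eq_sum_card_pairLink]
  have := sum_card_filter_insert_notMem_le hE2 hE3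
  omega

lemma exists_mem_forall_three_le_card_filter_mem {L : Finset (Finset α)}
    (hL : 2 * Fintype.card α < L.card) : ∃ e ∈ L, ∀ x ∈ e, 3 ≤ (L.filter (x ∈ ·)).card := by
  by_contra! h
  set low := univ.filter fun x : α => (L.filter (x ∈ ·)).card ≤ 2
  have hcover : L ⊆ low.biUnion fun x => L.filter (x ∈ ·) := fun e he => by
    obtain ⟨x, hx, hdeg⟩ := h e he
    exact mem_biUnion.mpr ⟨x, mem_filter.mpr ⟨mem_univ x, by omega⟩, mem_filter.mpr ⟨he, hx⟩⟩
  have : L.card ≤ 2 * Fintype.card α :=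
    calc L.card ≤ ∑ x ∈ low, (L.filter (x ∈ ·)).card :=
          (card_le_card hcover).trans card_biUnion_le
      _ ≤ ∑ _x ∈ low, 2 := sum_le_sum fun x hx => (mem_filter.mp hx).2
      _ ≤ 2 * Fintype.card α := by
        rw [sum_const, smul_eq_mul, mul_comm]
        exact Nat.mul_le_mul_left 2 (card_le_univ low)
  omega

omit [Fintype α] in
lemma exists_eq_pair_of_card_eq_two {e : Finset α} {x : α} (he : e.card = 2) (hx : x ∈ e) :
    ∃ y, y ≠ x ∧ e = {x, y} := by
  obtain ⟨y, hy⟩ := card_eq_one.mp ((card_erase_of_mem hx).trans (by rw [he]))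
  refine ⟨y, fun hyx => ?_, by rw [← hy, insert_erase hx]⟩
  simpa [hyx] using hy.ge (mem_singleton_self y)

lemma exists_three_path_of_card_lt {L : Finset (Finset α)} (hL : ∀ e ∈ L, e.card = 2)
    (hcard : 2 * Fintype.card α < L.card) :
    ∃ a u w b : α, a ≠ u ∧ a ≠ w ∧ a ≠ b ∧ u ≠ w ∧ u ≠ b ∧ w ≠ b ∧
      {u, a} ∈ L ∧ {u, w} ∈ L ∧ {w, b} ∈ L := by
  obtain ⟨e, heL, hdeg⟩ := exists_mem_forall_three_le_card_filter_mem hcard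
  obtain ⟨u, w, huw, rfl⟩ := card_eq_two.mp (hL e heL)
  obtain ⟨ea, hea, hea'⟩ :=
    exists_mem_notMem_of_card_lt_card (s := {{u, w}}) (t := L.filter (u ∈ ·))
    ((card_singleton _).trans_lt (by have := hdeg u (by simp); omega))
  obtain ⟨heaL, hua⟩ := mem_filter.mp hea
  obtain ⟨a, hau, rfl⟩ := exists_eq_pair_of_card_eq_two (hL _ heaL) hua
  obtain ⟨eb, heb, heb'⟩ :=
    exists_mem_notMem_of_card_lt_card (s := {{u, w}, {w, a}}) (t := L.filter (w ∈ ·))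
    (card_le_two.trans_lt (by have := hdeg w (by simp); omega))
  obtain ⟨hebL, hwb⟩ := mem_filter.mp heb
  obtain ⟨b, hbw, rfl⟩ := exists_eq_pair_of_card_eq_two (hL _ hebL) hwb
  refine ⟨a, u, w, b, hau, ?_, ?_, huw, ?_, hbw.symm, heaL, heL, hebL⟩
  · rintro rfl; simp at hea'
  · rintro rfl; simp [pair_comm] at heb'
  · rintro rfl; simp [pair_comm] at heb'

end SetFamily

lemma H5_isSubgraph_of_three_path {n : ℕ} (G : Graph23 n) {v a u w b : Fin n}
    (hau : a ≠ u) (haw : a ≠ w) (hab : a ≠ b) (huw : u ≠ w) (hub : u ≠ b) (hwb : w ≠ b)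
    (hua : {u, a} ∈ pairLink G.E2 G.E3 v) (huw' : {u, w} ∈ pairLink G.E2 G.E3 v)
    (hwb' : {w, b} ∈ pairLink G.E2 G.E3 v) : H5.IsSubgraph G := by
  simp only [pairLink, mem_filter, mem_insert, mem_singleton, not_or] at hua huw' hwb'
  obtain ⟨⟨hvu, hva⟩, -⟩ := hua.2
  obtain ⟨⟨-, hvw⟩, -⟩ := huw'.2
  obtain ⟨⟨-, hvb⟩, -⟩ := hwb'.2
  have hrot (x y : Fin n) : ({x, y, v} : Finset (Fin n)) = {v, x, y} := by
    rw [pair_comm y v, insert_comm]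
  refine ⟨![u, a, w, b, v], ?_, ?_, ?_⟩
  · intro i j
    fin_cases i <;> fin_cases j <;> simp [*, Ne.symm]
  · simp only [H5, mem_insert, mem_singleton, forall_eq_or_imp, forall_eq]
    refine ⟨?_, ?_, ?_⟩ <;> simp [*]
  · simp only [H5, mem_insert, mem_singleton, forall_eq_or_imp, forall_eq]
    refine ⟨?_, ?_, ?_⟩ <;> simp [*]

lemma card_pairLink_le_of_H5_free {n : ℕ} {G : Graph23 n} (hfree : ¬ H5.IsSubgraph G)
    (v : Fin n) : (pairLink G.E2 G.E3 v).card ≤ 2 * n := by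
  by_contra! hcard
  obtain ⟨a, u, w, b, hau, haw, hab, huw, hub, hwb, hua, huw', hwb'⟩ :=
    exists_three_path_of_card_lt (fun p hp => G.card2 p (mem_filter.mp hp).1)
      (by rwa [Fintype.card_fin])
  exact hfree (H5_isSubgraph_of_three_path G hau haw hab huw hub hwb hua huw' hwb')

lemma card_mul_sub_two_add_three_mul_card_le_of_H5_free {n : ℕ} {G : Graph23 n}
    (hfree : ¬ H5.IsSubgraph G) :
    G.E2.card * (n - 2) + 3 * G.E3.card ≤ 3 * n.choose 3 + 2 * n ^ 2 := by
  have hlink : ∑ v, (pairLink G.E2 G.E3 v).card ≤ 2 * n ^ 2 :=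
    calc ∑ v, (pairLink G.E2 G.E3 v).card ≤ ∑ _v : Fin n, 2 * n :=
          sum_le_sum fun v _ => card_pairLink_le_of_H5_free hfree v
      _ = 2 * n ^ 2 := by rw [sum_const, card_univ, Fintype.card_fin, smul_eq_mul]; ring
  have := card_mul_sub_two_add_three_mul_card_le G.card2 G.card3
  rw [Fintype.card_fin] at this
  omega

lemma Graph23.density_le_of_card_mul_add_le {n : ℕ} (hn : 3 ≤ n) (G : Graph23 n)
    (h : G.E2.card * (n - 2) + 3 * G.E3.card ≤ 3 * n.choose 3 + 2 * n ^ 2) :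
    G.density ≤ 1 + 24 / n := by
  have hm : (3 : ℝ) ≤ n := by exact_mod_cast hn
  have hc2 : (n.choose 2 : ℝ) = n * (n - 1) / 2 := Nat.cast_choose_two ℝ n
  have hc3 : (n.choose 3 : ℝ) = n * (n - 1) * (n - 2) / 6 := by
    have := congrArg (Nat.cast : ℕ → ℝ) (Nat.choose_succ_right_eq n 2)
    push_cast [Nat.cast_sub (by omega : 2 ≤ n)] at this
    rw [hc2] at this
    linarith
  have hR : (G.E2.card : ℝ) * (n - 2) + 3 * G.E3.card
      ≤ n * (n - 1) * (n - 2) / 2 + 2 * n ^ 2 := by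
    have := (Nat.cast_le (α := ℝ)).mpr h
    push_cast [Nat.cast_sub (by omega : 2 ≤ n)] at this
    linarith
  have hn1 : (0 : ℝ) < n - 1 := by linarith
  have hn2 : (0 : ℝ) < n - 2 := by linarith
  calc G.density = 2 * (G.E2.card * (n - 2) + 3 * G.E3.card) / (n * (n - 1) * (n - 2)) := by
        rw [Graph23.density, hc2, hc3]
        field_simp [hn1.ne', hn2.ne']
        ring
    _ ≤ 2 * (n * (n - 1) * (n - 2) / 2 + 2 * n ^ 2) / (n * (n - 1) * (n - 2)) := by gcongr
    _ = 1 + 4 * n / ((n - 1) * (n - 2)) := by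
        field_simp [hn1.ne', hn2.ne']
        ring
    _ ≤ 1 + 24 / n := by
        rw [add_le_add_iff_left, div_le_div_iff₀ (by positivity) (by positivity)]
        nlinarith

def Graph23.triples (n : ℕ) : Graph23 n where
  E2 := ∅
  E3 := univ.powersetCard 3
  card2 := by simp
  card3 _ ht := (mem_powersetCard.mp ht).2

lemma Graph23.density_triples {n : ℕ} (hn : 3 ≤ n) : (Graph23.triples n).density = 1 := by
  have : (n.choose 3 : ℝ) ≠ 0 := by exact_mod_cast (Nat.choose_pos hn).ne'
  simp [Graph23.density, Graph23.triples, this]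

lemma not_H5_isSubgraph_triples (n : ℕ) : ¬ H5.IsSubgraph (Graph23.triples n) := by
  rintro ⟨f, -, hE2, -⟩
  simpa [Graph23.triples] using hE2 {0, 1} (by simp [H5])

lemma H5_turanDensityN_mem_Icc {n : ℕ} (hn : 3 ≤ n) :
    H5.turanDensityN n ∈ Set.Icc (1 : ℝ) (1 + 24 / n) := by
  have hupper : ∀ x ∈ {x : ℝ | ∃ G : Graph23 n, ¬ H5.IsSubgraph G ∧ G.density = x},
      x ≤ 1 + 24 / n := by
    rintro x ⟨G, hfree, rfl⟩
    exact G.density_le_of_card_mul_add_le hn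
      (card_mul_sub_two_add_three_mul_card_le_of_H5_free hfree)
  have hone : (1 : ℝ) ∈ {x : ℝ | ∃ G : Graph23 n, ¬ H5.IsSubgraph G ∧ G.density = x} :=
    ⟨_, not_H5_isSubgraph_triples n, Graph23.density_triples hn⟩
  exact ⟨le_csSup ⟨_, hupper⟩ hone, csSup_le ⟨1, hone⟩ hupper⟩

theorem H5_degenerate :
    Filter.Tendsto H5.turanDensityN Filter.atTop (nhds 1) := by
  have hlim : Tendsto (fun n : ℕ => 1 + 24 / (n : ℝ)) atTop (nhds 1) := by
    simpa using tendsto_const_nhds.add (tendsto_const_div_atTop_nhds_zero_nat (24 : ℝ))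
  refine tendsto_of_tendsto_of_tendsto_of_le_of_le' tendsto_const_nhds hlim ?_ ?_ <;>
    filter_upwards [eventually_ge_atTop 3] with n hn
  exacts [(H5_turanDensityN_mem_Icc hn).1, (H5_turanDensityN_mem_Icc hn).2]
end
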